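/- Fix q ∈ ℝ with 0 < q < 1 and nonzero A, B, C, D, λ ∈ ℂ with |ADλ| < 1, and assume (BCDλ;q)_m ≠ 0 and (ABCλ;q)_m ≠ 0 for all m ≥ 0. For n ≥ 0 let X_n = λⁿ · (A;q)_n (B;q)_n (C;q)_n (D;q)_n / ((BCDλ;q)_n (ABCλ;q)_n) · ₃φ₂(BCλ, Bqⁿ, Cqⁿ; BCDλqⁿ, ABCλqⁿ; q, ADλ). Then lim_{n→∞} X_n / λⁿ = (A;q)_∞ (B;q)_∞ (C;q)_∞ (D;q)_∞ (ABCDλ²;q)_∞ / ((BCDλ;q)_∞ (ABCλ;q)_∞ (ADλ;q)_∞). -/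

import Mathlib

/-!
After dividing by `λⁿ`, `X_n` is a ratio of finite `q`-shifted factorials, which converges to the
corresponding ratio of infinite products, times a `₃φ₂` whose parameters `Bqⁿ, Cqⁿ, BCDλqⁿ, ABCλqⁿ`
tend to `0` uniformly in the summation index. With the geometric bound `|ADλ|ᵏ` this gives termwise
dominated convergence of the `₃φ₂` to the `₁φ₀` series `∑ (BCλ;q)_k / (q;q)_k (ADλ)ᵏ`, which the
`q`-binomial theorem evaluates as `(ABCDλ²;q)_∞ / (ADλ;q)_∞`. The `q`-binomial theorem itself comes
from the functional equation `(1 - z) F(z) = (1 - az) F(qz)`, iterated `n` times, letting `n → ∞`.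
-/

open Filter Topology

noncomputable def qp (q a : ℂ) (n : ℕ) : ℂ := ∏ j ∈ Finset.range n, (1 - a * q ^ j)
noncomputable def qpInf (q a : ℂ) : ℂ := ∏' j : ℕ, (1 - a * q ^ j)
noncomputable def phi32 (q a b c d e w : ℂ) : ℂ :=
  ∑' k : ℕ, (qp q a k * qp q b k * qp q c k) / (qp q d k * qp q e k * qp q q k) * w ^ k
noncomputable def phi21 (q a b c w : ℂ) : ℂ :=
  ∑' k : ℕ, (qp q a k * qp q b k) / (qp q c k * qp q q k) * w ^ k
noncomputable def phi11 (q a b w : ℂ) : ℂ :=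
  ∑' k : ℕ, qp q a k / (qp q b k * qp q q k) * (-1) ^ k * q ^ (k * (k - 1) / 2) * w ^ k

noncomputable def Prec {K : Type*} [Field K] (a b2 : ℕ → K) (z : K) : ℕ → K
  | 0 => 1
  | 1 => z - a 0
  | n + 2 => (z - a (n + 1)) * Prec a b2 z (n + 1) - b2 (n + 1) * Prec a b2 z n

noncomputable def aCDH (q A B C D : ℂ) (n : ℕ) : ℂ :=
  (1 / A + 1 / B + 1 / C + 1 / D) * q ^ (n : ℤ) - (1 + q) * q ^ (2 * (n : ℤ) - 1)

noncomputable def bCDH (q A B C D : ℂ) (n : ℕ) : ℂ :=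
  q / (A * B * C * D) * (1 - A * q ^ ((n : ℤ) - 1)) * (1 - B * q ^ ((n : ℤ) - 1)) *
    (1 - C * q ^ ((n : ℤ) - 1)) * (1 - D * q ^ ((n : ℤ) - 1))

/-- `X` solves the associated continuous dual `q`-Hahn recurrence
`X_{n+1} - (z - a_n) X_n + b_n² X_{n-1} = 0` for `n ≥ 1`. -/
def SolvesCDH (q A B C D z : ℂ) (X : ℕ → ℂ) : Prop :=
  ∀ n : ℕ, 1 ≤ n →
    X (n + 1) - (z - aCDH q A B C D n) * X n + bCDH q A B C D n * X (n - 1) = 0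

lemma qp_succ (q a : ℂ) (n : ℕ) : qp q a (n + 1) = qp q a n * (1 - a * q ^ n) :=
  Finset.prod_range_succ _ _

lemma tendsto_tsum_mul_pow_of_bounded {𝕜 α : Type*} [NormedField 𝕜] [CompleteSpace 𝕜]
    {l : Filter α} {c : α → ℕ → 𝕜} {c₀ : ℕ → 𝕜} {w : 𝕜} (hw : ‖w‖ < 1) {M : ℝ}
    (hc : ∀ k, Tendsto (c · k) l (𝓝 (c₀ k))) (hM : ∀ᶠ n in l, ∀ k, ‖c n k‖ ≤ M) :
    Tendsto (fun n => ∑' k, c n k * w ^ k) l (𝓝 (∑' k, c₀ k * w ^ k)) :=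
  tendsto_tsum_of_dominated_convergence
    ((summable_geometric_of_lt_one (norm_nonneg w) hw).mul_left M)
    (fun k => (hc k).mul_const _)
    (hM.mono fun n hn k => by
      rw [norm_mul, norm_pow]
      exact mul_le_mul_of_nonneg_right (hn k) (by positivity))

section QPochhammer

variable {q : ℂ}

lemma norm_mul_pow_le_norm (hq : ‖q‖ ≤ 1) (x : ℂ) (j : ℕ) : ‖x * q ^ j‖ ≤ ‖x‖ := by
  rw [norm_mul, norm_pow]
  exact mul_le_of_le_one_right (norm_nonneg x) (pow_le_one₀ (norm_nonneg q) hq)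

lemma one_sub_mul_pow_ne_zero (hq : ‖q‖ ≤ 1) {x : ℂ} (hx : ‖x‖ < 1) (j : ℕ) :
    1 - x * q ^ j ≠ 0 := by
  intro h
  have hle := norm_mul_pow_le_norm hq x j
  rw [← sub_eq_zero.mp h, norm_one] at hle
  linarith

lemma qp_ne_zero_of_norm_lt_one (hq : ‖q‖ ≤ 1) {x : ℂ} (hx : ‖x‖ < 1) (k : ℕ) :
    qp q x k ≠ 0 :=
  Finset.prod_ne_zero_iff.mpr fun j _ => one_sub_mul_pow_ne_zero hq hx j

variable (hq : ‖q‖ < 1)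
include hq

lemma summable_norm_neg_mul_pow (x : ℂ) : Summable fun j : ℕ => ‖-(x * q ^ j)‖ := by
  simpa only [norm_neg, norm_mul, norm_pow] using
    (summable_geometric_of_lt_one (norm_nonneg q) hq).mul_left ‖x‖

lemma tendsto_qp_qpInf (a : ℂ) : Tendsto (qp q a) atTop (𝓝 (qpInf q a)) := by
  have hmul : Multipliable fun j : ℕ => 1 - a * q ^ j := by
    simpa only [← sub_eq_add_neg] using multipliable_one_add_of_summable (summable_norm_neg_mul_pow hq a)
  exact hmul.hasProd.tendsto_prod_nat

lemma qpInf_ne_zero (a : ℂ) (h : ∀ j : ℕ, 1 - a * q ^ j ≠ 0) : qpInf q a ≠ 0 := by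
  simpa only [qpInf, ← sub_eq_add_neg] using
    tprod_one_add_ne_zero_of_summable (by simpa only [← sub_eq_add_neg] using h)
      (summable_norm_neg_mul_pow hq a)

lemma qpInf_ne_zero_of_qp_ne_zero {a : ℂ} (h : ∀ m : ℕ, qp q a m ≠ 0) : qpInf q a ≠ 0 :=
  qpInf_ne_zero hq a fun j => right_ne_zero_of_mul (qp_succ q a j ▸ h (j + 1))

lemma qpInf_ne_zero_of_norm_lt_one {x : ℂ} (hx : ‖x‖ < 1) : qpInf q x ≠ 0 :=
  qpInf_ne_zero hq x (one_sub_mul_pow_ne_zero hq.le hx)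

lemma norm_qp_sub_one_le (x : ℂ) (k : ℕ) :
    ‖qp q x k - 1‖ ≤ Real.exp (‖x‖ / (1 - ‖q‖)) - 1 := by
  have hsum : ∑ j ∈ Finset.range k, ‖-(x * q ^ j)‖ ≤ ‖x‖ / (1 - ‖q‖) := by
    simp only [norm_neg, norm_mul, norm_pow, ← Finset.mul_sum]
    rw [div_eq_mul_one_div]
    gcongr
    simpa using geom_sum_Ico_le_of_lt_one (m := 0) (n := k) (norm_nonneg q) hq
  calc ‖qp q x k - 1‖ = ‖∏ j ∈ Finset.range k, (1 + -(x * q ^ j)) - 1‖ := by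
        simp only [qp, ← sub_eq_add_neg]
    _ ≤ Real.exp (∑ j ∈ Finset.range k, ‖-(x * q ^ j)‖) - 1 :=
        Finset.norm_prod_one_add_sub_one_le _ _
    _ ≤ Real.exp (‖x‖ / (1 - ‖q‖)) - 1 := by gcongr

lemma tendstoUniformly_qp_mul_pow (x : ℂ) :
    TendstoUniformly (fun n k => qp q (x * q ^ n) k) (fun _ => 1) atTop := by
  have hsmall : Tendsto (fun n : ℕ => Real.exp (‖x * q ^ n‖ / (1 - ‖q‖)) - 1) atTop (𝓝 0) := by
    have hx : Tendsto (fun n : ℕ => x * q ^ n) atTop (𝓝 0) := by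
      simpa using (tendsto_pow_atTop_nhds_zero_of_norm_lt_one hq).const_mul x
    have hcont : Continuous fun y : ℂ => Real.exp (‖y‖ / (1 - ‖q‖)) - 1 := by fun_prop
    simpa only [Function.comp_def, norm_zero, zero_div, Real.exp_zero, sub_self] using
      (hcont.tendsto 0).comp hx
  rw [Metric.tendstoUniformly_iff]
  intro ε hε
  filter_upwards [hsmall.eventually_lt_const hε] with n hn k
  rw [dist_comm, dist_eq_norm]
  exact (norm_qp_sub_one_le hq _ k).trans_lt hn

lemma eventually_norm_qp_mul_pow_mem_Icc (x : ℂ) :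
    ∀ᶠ n in atTop, ∀ k, ‖qp q (x * q ^ n) k‖ ∈ Set.Icc (1 / 2 : ℝ) (3 / 2) := by
  filter_upwards [Metric.tendstoUniformly_iff.mp (tendstoUniformly_qp_mul_pow hq x) (1 / 2)
    (by norm_num)] with n hn k
  have hk := (abs_norm_sub_norm_le (qp q (x * q ^ n) k) 1).trans_lt
    (by simpa only [dist_comm, dist_eq_norm] using hn k)
  rw [norm_one, abs_lt] at hk
  constructor <;> linarith

end QPochhammer

section QBinomial

noncomputable def phi10 (q a z : ℂ) : ℂ :=
  ∑' k : ℕ, qp q a k / qp q q k * z ^ k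

variable {q : ℂ} (hq : ‖q‖ < 1)
include hq

lemma exists_norm_qp_div_qp_self_le (a : ℂ) : ∃ M, ∀ k, ‖qp q a k / qp q q k‖ ≤ M := by
  obtain ⟨M, hM⟩ := ((tendsto_qp_qpInf hq a).div (tendsto_qp_qpInf hq q)
    (qpInf_ne_zero_of_norm_lt_one hq hq)).norm.bddAbove_range
  exact ⟨M, fun k => hM ⟨k, rfl⟩⟩

lemma summable_phi10 (a : ℂ) {z : ℂ} (hz : ‖z‖ < 1) :
    Summable fun k => qp q a k / qp q q k * z ^ k := by
  obtain ⟨M, hM⟩ := exists_norm_qp_div_qp_self_le hq a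
  refine .of_norm_bounded ((summable_geometric_of_lt_one (norm_nonneg z) hz).mul_left M) fun k => ?_
  rw [norm_mul, norm_pow]
  exact mul_le_mul_of_nonneg_right (hM k) (by positivity)

lemma qp_div_qp_self_succ_mul (a : ℂ) (k : ℕ) :
    qp q a (k + 1) / qp q q (k + 1) * (1 - q ^ (k + 1)) =
      qp q a k / qp q q k * (1 - a * q ^ k) := by
  have h₁ : qp q q k ≠ 0 := qp_ne_zero_of_norm_lt_one hq.le hq k
  have h₂ : 1 - q ^ k * q ≠ 0 := mul_comm q (q ^ k) ▸ one_sub_mul_pow_ne_zero hq.le hq k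
  rw [qp_succ, qp_succ, pow_succ]
  field_simp

lemma one_sub_mul_phi10 (a : ℂ) {z : ℂ} (hz : ‖z‖ < 1) :
    (1 - z) * phi10 q a z = (1 - a * z) * phi10 q a (q * z) := by
  have hqz : ‖q * z‖ < 1 := by
    rw [norm_mul]
    nlinarith [norm_nonneg q, norm_nonneg z]
  have hs := summable_phi10 hq a hz
  have hs' := summable_phi10 hq a hqz
  have hdiff : phi10 q a z - phi10 q a (q * z) =
      ∑' k, qp q a k / qp q q k * (1 - q ^ k) * z ^ k := by
    rw [phi10, phi10, ← hs.tsum_sub hs']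
    exact tsum_congr fun k => by ring
  -- the `k = 0` term vanishes, and the remaining terms shift by the coefficient recursion
  have hshift : ∑' k, qp q a k / qp q q k * (1 - q ^ k) * z ^ k =
      ∑' k, qp q a k / qp q q k * (1 - a * q ^ k) * z ^ (k + 1) := by
    rw [((hs.sub hs').congr fun k => by ring).tsum_eq_zero_add]
    simp only [pow_zero, sub_self, mul_zero, zero_mul, zero_add]
    exact tsum_congr fun k => by rw [qp_div_qp_self_succ_mul hq]
  have hrhs : z * phi10 q a z - a * z * phi10 q a (q * z) =
      ∑' k, qp q a k / qp q q k * (1 - a * q ^ k) * z ^ (k + 1) := by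
    rw [phi10, phi10, ← tsum_mul_left, ← tsum_mul_left,
      ← (hs.mul_left z).tsum_sub (hs'.mul_left (a * z))]
    exact tsum_congr fun k => by ring
  linear_combination hdiff + hshift - hrhs

lemma qp_mul_phi10 (a : ℂ) {z : ℂ} (hz : ‖z‖ < 1) (n : ℕ) :
    qp q z n * phi10 q a z = qp q (a * z) n * phi10 q a (q ^ n * z) := by
  induction n with
  | zero => simp [qp]
  | succ n ih =>
    have hzn : ‖q ^ n * z‖ < 1 := by
      rw [mul_comm]
      exact (norm_mul_pow_le_norm hq.le z n).trans_lt hz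
    have step := one_sub_mul_phi10 hq a hzn
    rw [show q * (q ^ n * z) = q ^ (n + 1) * z by ring] at step
    rw [qp_succ, qp_succ]
    linear_combination (1 - z * q ^ n) * ih + qp q (a * z) n * step

lemma tendsto_phi10_pow_mul (a : ℂ) {z : ℂ} (hz : ‖z‖ < 1) :
    Tendsto (fun n : ℕ => phi10 q a (q ^ n * z)) atTop (𝓝 1) := by
  obtain ⟨M, hM⟩ := exists_norm_qp_div_qp_self_le hq a
  have hlim := tendsto_tsum_mul_pow_of_bounded hz (M := M)
    (c := fun n k => qp q a k / qp q q k * (q ^ n) ^ k)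
    (fun k => ((tendsto_pow_atTop_nhds_zero_of_norm_lt_one hq).pow k).const_mul _)
    (Eventually.of_forall fun n k => by
      rw [← pow_mul]
      exact (norm_mul_pow_le_norm hq.le _ _).trans (hM k))
  have hval : ∑' k, qp q a k / qp q q k * (0 ^ k * z ^ k) = 1 := by
    rw [tsum_eq_single 0 fun k hk => by simp [zero_pow hk]]
    simp [qp]
  simpa only [phi10, mul_pow, mul_assoc, hval] using hlim

theorem phi10_eq_qpInf_div (a : ℂ) {z : ℂ} (hz : ‖z‖ < 1) :
    phi10 q a z = qpInf q (a * z) / qpInf q z := by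
  have hlim : Tendsto (fun n => qp q z n * phi10 q a z) atTop (𝓝 (qpInf q (a * z) * 1)) :=
    ((tendsto_qp_qpInf hq (a * z)).mul (tendsto_phi10_pow_mul hq a hz)).congr fun n =>
      (qp_mul_phi10 hq a hz n).symm
  rw [eq_div_iff (qpInf_ne_zero_of_norm_lt_one hq hz), mul_comm, ← mul_one (qpInf q (a * z))]
  exact tendsto_nhds_unique ((tendsto_qp_qpInf hq z).mul_const _) hlim

lemma tendsto_phi32_mul_pow (a b c d e : ℂ) {w : ℂ} (hw : ‖w‖ < 1) :
    Tendsto (fun n : ℕ => phi32 q a (b * q ^ n) (c * q ^ n) (d * q ^ n) (e * q ^ n) w) atTop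
      (𝓝 (phi10 q a w)) := by
  obtain ⟨M, hM⟩ := exists_norm_qp_div_qp_self_le hq a
  let r : ℕ → ℕ → ℂ := fun n k =>
    qp q (b * q ^ n) k * qp q (c * q ^ n) k / (qp q (d * q ^ n) k * qp q (e * q ^ n) k)
  have hr : ∀ k, Tendsto (r · k) atTop (𝓝 1) := fun k => by
    have h := fun x => (tendstoUniformly_qp_mul_pow hq x).tendsto_at k
    have hlim := ((h b).mul (h c)).div ((h d).mul (h e)) (by norm_num)
    rwa [mul_one, div_one] at hlim
  have hrM : ∀ᶠ n in atTop, ∀ k, ‖r n k‖ ≤ 9 := by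
    filter_upwards [eventually_norm_qp_mul_pow_mem_Icc hq b, eventually_norm_qp_mul_pow_mem_Icc hq c,
      eventually_norm_qp_mul_pow_mem_Icc hq d, eventually_norm_qp_mul_pow_mem_Icc hq e]
      with n hb hc hd he k
    calc ‖r n k‖ ≤ 3 / 2 * (3 / 2) / (1 / 2 * (1 / 2)) := by
          simp only [r, norm_div, norm_mul]
          gcongr
          exacts [(hb k).2, (hc k).2, (hd k).1, (he k).1]
      _ = 9 := by norm_num
  have hlim := tendsto_tsum_mul_pow_of_bounded hw (M := M * 9)
    (c := fun n k => qp q a k / qp q q k * r n k)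
    (fun k => by simpa using (hr k).const_mul (qp q a k / qp q q k))
    (hrM.mono fun n hn k => by
      rw [norm_mul]
      exact mul_le_mul (hM k) (hn k) (norm_nonneg _) ((norm_nonneg _).trans (hM k)))
  refine hlim.congr fun n => tsum_congr fun k => ?_
  simp only [r]
  ring

end QBinomial

theorem stmt5_general (q : ℝ) (hq0 : 0 < q) (hq1 : q < 1)
    (A B C D lam : ℂ) (hlam : lam ≠ 0)
    (harg : ‖A * D * lam‖ < 1)
    (h1 : ∀ m : ℕ, qp q (B * C * D * lam) m ≠ 0)
    (h2 : ∀ m : ℕ, qp q (A * B * C * lam) m ≠ 0)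
    (X : ℕ → ℂ)
    (hX : ∀ n : ℕ, X n =
      lam ^ n * (qp q A n * qp q B n * qp q C n * qp q D n) /
        (qp q (B * C * D * lam) n * qp q (A * B * C * lam) n) *
        phi32 q (B * C * lam) (B * (q : ℂ) ^ n) (C * (q : ℂ) ^ n)
          (B * C * D * lam * (q : ℂ) ^ n) (A * B * C * lam * (q : ℂ) ^ n) (A * D * lam)) :
    Tendsto (fun n : ℕ => X n / lam ^ n) atTop
      (nhds (qpInf q A * qpInf q B * qpInf q C * qpInf q D *
          qpInf q (A * B * C * D * lam ^ 2) /
        (qpInf q (B * C * D * lam) * qpInf q (A * B * C * lam) * qpInf q (A * D * lam)))) := by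
  have hq : ‖(q : ℂ)‖ < 1 := by rwa [Complex.norm_real, Real.norm_of_nonneg hq0.le]
  have hprod := tendsto_qp_qpInf hq
  have hratio := (((hprod A).mul (hprod B)).mul (hprod C)).mul (hprod D) |>.div
    ((hprod (B * C * D * lam)).mul (hprod (A * B * C * lam)))
    (mul_ne_zero (qpInf_ne_zero_of_qp_ne_zero hq h1) (qpInf_ne_zero_of_qp_ne_zero hq h2))
  have hphi := tendsto_phi32_mul_pow hq (B * C * lam) B C (B * C * D * lam) (A * B * C * lam) harg
  rw [phi10_eq_qpInf_div hq _ harg, show B * C * lam * (A * D * lam) = A * B * C * D * lam ^ 2 by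
    ring] at hphi
  convert hratio.mul hphi using 2 with n
  · simp only [hX n, Pi.div_apply]
    rw [div_eq_iff (pow_ne_zero n hlam)]
    ring
  · ring

/-- Large-`n` asymptotics (2.23) of the solution `X_n^{(1)}`. -/
theorem stmt5 (q : ℝ) (hq0 : 0 < q) (hq1 : q < 1)
    (A B C D lam : ℂ) (hA : A ≠ 0) (hB : B ≠ 0) (hC : C ≠ 0) (hD : D ≠ 0) (hlam : lam ≠ 0)
    (harg : ‖A * D * lam‖ < 1)
    (h1 : ∀ m : ℕ, qp q (B * C * D * lam) m ≠ 0)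
    (h2 : ∀ m : ℕ, qp q (A * B * C * lam) m ≠ 0)
    (X : ℕ → ℂ)
    (hX : ∀ n : ℕ, X n =
      lam ^ n * (qp q A n * qp q B n * qp q C n * qp q D n) /
        (qp q (B * C * D * lam) n * qp q (A * B * C * lam) n) *
        phi32 q (B * C * lam) (B * (q : ℂ) ^ n) (C * (q : ℂ) ^ n)
          (B * C * D * lam * (q : ℂ) ^ n) (A * B * C * lam * (q : ℂ) ^ n) (A * D * lam)) :
    Tendsto (fun n : ℕ => X n / lam ^ n) atTop
      (nhds (qpInf q A * qpInf q B * qpInf q C * qpInf q D *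
          qpInf q (A * B * C * D * lam ^ 2) /
        (qpInf q (B * C * D * lam) * qpInf q (A * B * C * lam) * qpInf q (A * D * lam)))) :=
  stmt5_general q hq0 hq1 A B C D lam hlam harg h1 h2 X hX
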